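/- arXiv:1210.5319 — 2 statements merged into one kernel-verified Lean document; each statement's English description precedes it below -/
import Mathlib

section
/- With β_n : V^{⊗n} → V^{⊗n} the Dynkin–Specht–Wever map over a field of characteristic 0 (or over ℤ_(2)), one has β_n ∘ β_n = n · β_n. Consequently, if n is odd (hence n is invertible in ℤ_(2)), the map (1/n)·β_n is idempotent. -/
open Equiv MonoidAlgebra

/-- The Dynkin–Specht–Wever element in the rational group algebra of the symmetric group
(permutations of `ℕ`, with the `n`-th stage supported on permutations of `{0, …, n-1}`):
`β 2 = 1 - (1,2)` and `β (n+1) = (1 - σ_{n+1}) * β n`, where `σ_m` is the cycle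
`(1, 2, …, m)` (realized as `List.formPerm` of `0, 1, …, m-1`). -/
noncomputable def dswElement : ℕ → MonoidAlgebra ℚ (Equiv.Perm ℕ)
  | 0 => 1
  | 1 => 1
  | 2 => 1 - MonoidAlgebra.of ℚ (Equiv.Perm ℕ) (Equiv.swap 0 1)
  | (n + 3) =>
      (1 - MonoidAlgebra.of ℚ (Equiv.Perm ℕ) ((List.range (n + 3)).formPerm)) *
        dswElement (n + 2)

/-!
A permutation `g` of `ℕ` sends the generic word `x₀ x₁ ⋯ xₙ₋₁` of the free associative algebra
to `x_{g⁻¹ 0} ⋯ x_{g⁻¹ (n-1)}` (the place action on `V^{⊗n}`); extended linearly this is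
injective on the group algebra of the permutations of `{0, …, n-1}`, so it suffices to compare
the images of `βₙ²` and `n βₙ`. Left multiplication by `βₘ` acts on words of length `n ≥ m` by
bracketing the first `m` letters: if `w = t b r` with `|t| = m`, the cycle `σₘ₊₁` moves `b` to
the front, so `(1 - σₘ₊₁)` turns `[t] b r` into `[[t], b] r`. Hence `βₙ` maps the generic word
to its left-normed bracket `ℓ = [⋯[x₀, x₁], ⋯, xₙ₋₁]` and `βₙ²` maps it to `D ℓ`, where `D` is
the Dynkin operator, and Dynkin's lemma `D ℓ = n ℓ` finishes the proof. Dynkin's lemma follows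
from `D (P ℓ') = [D P, ℓ']` for left-normed brackets `ℓ'` and `P` without constant term.
-/

namespace List

variable {α : Type*}

theorem map_formPerm_self [DecidableEq α] {l : List α} (hl : l.Nodup) :
    l.map l.formPerm = l.rotate 1 := by
  refine ext_getElem (by simp) fun i _ _ => ?_
  rw [getElem_map, formPerm_apply_getElem _ hl, getElem_rotate]

def moveToFront (m : ℕ) (l : List α) : List α :=
  (l.take (m + 1)).rotate m ++ l.drop (m + 1)

theorem moveToFront_append_cons {m : ℕ} {t : List α} (ht : t.length = m) (b : α) (r : List α) :
    moveToFront m (t ++ b :: r) = b :: (t ++ r) := by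
  have hb : (t ++ [b]).length = m + 1 := by simp [ht]
  rw [moveToFront, ← singleton_append, ← append_assoc, take_left' hb, drop_left' hb, ← ht,
    rotate_append_length_eq, singleton_append, cons_append]

theorem map_moveToFront {β : Type*} (f : α → β) (m : ℕ) (l : List α) :
    (moveToFront m l).map f = moveToFront m (l.map f) := by
  simp [moveToFront, map_rotate, map_take, map_drop]

theorem map_inv_formPerm_range {m n : ℕ} (h : m + 1 ≤ n) :
    (range n).map ⇑(range (m + 1)).formPerm⁻¹ = moveToFront m (range n) := by
  set σ := (range (m + 1)).formPerm
  suffices (moveToFront m (range n)).map σ = range n by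
    conv_lhs => rw [← this, map_map]
    simp
  have hfix : ∀ i ∈ (range n).drop (m + 1), σ i = i := by
    intro i hi
    rw [range_eq_range', drop_range', mem_range'_1] at hi
    exact formPerm_apply_of_notMem (by simp; omega)
  rw [moveToFront, map_append, map_rotate, take_range, Nat.min_eq_left h,
    map_formPerm_self nodup_range, rotate_rotate, map_congr_left hfix, map_id',
    show 1 + m = (range (m + 1)).length by simp [add_comm], rotate_length]
  conv_rhs => rw [← take_append_drop (m + 1) (range n), take_range, Nat.min_eq_left h]

theorem formPerm_range_mem_fixingSubgroup {m n : ℕ} (h : m ≤ n) :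
    (range m).formPerm ∈ fixingSubgroup (Equiv.Perm ℕ) (Set.Ici n) :=
  (mem_fixingSubgroup_iff _).2 fun i hi =>
    formPerm_apply_of_notMem (by simpa using h.trans (Set.mem_Ici.1 hi))

end List

noncomputable section

attribute [local instance] LieRing.ofAssociativeRing

abbrev WordAlgebra (R α : Type*) [CommRing R] := MonoidAlgebra R (FreeMonoid α)

namespace WordAlgebra

variable (R : Type*) {α : Type*} [CommRing R]

def word (l : List α) : WordAlgebra R α := of R (FreeMonoid α) (FreeMonoid.ofList l)

def letter (a : α) : WordAlgebra R α := word R [a]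

def leftNormed : List α → WordAlgebra R α
  | [] => 0
  | a :: l => l.foldl (fun u b => ⁅u, letter R b⁆) (letter R a)

def liftWord {M : Type*} [AddCommGroup M] [Module R M] (f : List α → M) :
    WordAlgebra R α →ₗ[R] M :=
  Finsupp.linearCombination R (f ∘ FreeMonoid.toList) ∘ₗ (coeffLinearEquiv R).toLinearMap

variable (α) in
def augmentation : WordAlgebra R α →ₐ[R] R :=
  MonoidAlgebra.lift R R (FreeMonoid α) (FreeMonoid.lift fun _ => 0)

def dynkin : WordAlgebra R α →ₗ[R] WordAlgebra R α := liftWord R (leftNormed R)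

variable {R}

theorem word_append (l t : List α) : word R (l ++ t) = word R l * word R t := by
  simp [word]

theorem word_cons (a : α) (l : List α) : word R (a :: l) = letter R a * word R l :=
  word_append [a] l

theorem word_append_singleton (l : List α) (b : α) :
    word R (l ++ [b]) = word R l * letter R b :=
  word_append l [b]

theorem word_nil : word R ([] : List α) = 1 := map_one _

@[simp]
theorem liftWord_word {M : Type*} [AddCommGroup M] [Module R M] (f : List α → M) (l : List α) :
    liftWord R f (word R l) = f l := by
  simp [liftWord, word, coeffLinearEquiv]

@[simp]
theorem augmentation_letter (a : α) : augmentation R α (letter R a) = 0 := by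
  simp [augmentation, letter, word]

theorem augmentation_word {l : List α} (hl : l ≠ []) : augmentation R α (word R l) = 0 := by
  obtain ⟨a, l, rfl⟩ := List.exists_cons_of_ne_nil hl
  rw [word_cons, map_mul, augmentation_letter, zero_mul]

theorem augmentation_lie (u v : WordAlgebra R α) : augmentation R α ⁅u, v⁆ = 0 := by
  rw [Ring.lie_def, map_sub, map_mul, map_mul, mul_comm, sub_self]

@[simp]
theorem dynkin_word (l : List α) : dynkin R (word R l) = leftNormed R l :=
  liftWord_word _ l

theorem leftNormed_singleton (b : α) : leftNormed R [b] = letter R b := rfl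

theorem leftNormed_append_singleton {l : List α} (hl : l ≠ []) (b : α) :
    leftNormed R (l ++ [b]) = ⁅leftNormed R l, letter R b⁆ := by
  cases l with
  | nil => exact absurd rfl hl
  | cons a l => simp [leftNormed, List.foldl_append]

theorem augmentation_leftNormed {l : List α} (hl : l ≠ []) :
    augmentation R α (leftNormed R l) = 0 := by
  induction l using List.reverseRecOn with
  | nil => exact absurd rfl hl
  | append_singleton l b _ =>
    rcases eq_or_ne l [] with rfl | hl'
    · exact augmentation_letter b
    · rw [leftNormed_append_singleton hl', augmentation_lie]

theorem dynkin_word_mul_letter (l : List α) (b : α) :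
    dynkin R (word R l * letter R b) =
      ⁅dynkin R (word R l), letter R b⁆ + augmentation R α (word R l) • letter R b := by
  rw [← word_append_singleton, dynkin_word, dynkin_word]
  rcases eq_or_ne l [] with rfl | hl
  · simp [leftNormed, letter, word_nil]
  · rw [leftNormed_append_singleton hl, augmentation_word hl, zero_smul, add_zero]

theorem dynkin_mul_letter (P : WordAlgebra R α) (b : α) :
    dynkin R (P * letter R b) = ⁅dynkin R P, letter R b⁆ + augmentation R α P • letter R b := by
  induction P using MonoidAlgebra.induction_linear with
  | zero => simp
  | add P Q hP hQ => simp only [add_mul, map_add, hP, hQ, add_lie, add_smul]; abel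
  | single w c =>
    obtain ⟨l, rfl⟩ := FreeMonoid.ofList.surjective w
    rw [← smul_of, ← word, smul_mul_assoc, map_smul, map_smul, map_smul, dynkin_word_mul_letter,
      smul_lie, smul_add, smul_assoc]

theorem dynkin_letter (b : α) : dynkin R (letter R b) = letter R b :=
  dynkin_word [b]

theorem dynkin_mul_leftNormed {P : WordAlgebra R α} (hP : augmentation R α P = 0) {l : List α}
    (hl : l ≠ []) : dynkin R (P * leftNormed R l) = ⁅dynkin R P, leftNormed R l⁆ := by
  induction l using List.reverseRecOn generalizing P with
  | nil => exact absurd rfl hl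
  | append_singleton l b ih =>
    rcases eq_or_ne l [] with rfl | hl'
    · rw [List.nil_append, leftNormed_singleton, dynkin_mul_letter, hP, zero_smul, add_zero]
    have hPb : augmentation R α (P * letter R b) = 0 := by
      rw [map_mul, hP, zero_mul]
    have hPl : augmentation R α (P * leftNormed R l) = 0 := by
      rw [map_mul, hP, zero_mul]
    set L := leftNormed R l
    calc dynkin R (P * leftNormed R (l ++ [b]))
        = dynkin R (P * L * letter R b) - dynkin R (P * letter R b * L) := by
          rw [leftNormed_append_singleton hl', Ring.lie_def, mul_sub, map_sub, mul_assoc,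
            mul_assoc]
      _ = ⁅⁅dynkin R P, L⁆, letter R b⁆ - ⁅⁅dynkin R P, letter R b⁆, L⁆ := by
          rw [dynkin_mul_letter, hPl, zero_smul, add_zero, ih hP hl', ih hPb hl', dynkin_mul_letter,
            hP, zero_smul, add_zero]
      _ = ⁅dynkin R P, leftNormed R (l ++ [b])⁆ := by
          rw [leftNormed_append_singleton hl', leibniz_lie, ← lie_skew ⁅dynkin R P, letter R b⁆,
            sub_neg_eq_add]

theorem dynkin_leftNormed (l : List α) :
    dynkin R (leftNormed R l) = l.length • leftNormed R l := by
  induction l using List.reverseRecOn with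
  | nil => simp [leftNormed]
  | append_singleton l b ih =>
    rcases eq_or_ne l [] with rfl | hl
    · rw [List.nil_append, leftNormed_singleton, dynkin_letter, List.length_singleton, one_smul]
    calc dynkin R (leftNormed R (l ++ [b]))
        = dynkin R (leftNormed R l * letter R b) - dynkin R (letter R b * leftNormed R l) := by
          rw [leftNormed_append_singleton hl, Ring.lie_def, map_sub]
      _ = l.length • ⁅leftNormed R l, letter R b⁆ - ⁅letter R b, leftNormed R l⁆ := by
          rw [dynkin_mul_letter, augmentation_leftNormed hl, zero_smul, add_zero, ih, nsmul_lie,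
            dynkin_mul_leftNormed (augmentation_letter b) hl, dynkin_letter]
      _ = (l ++ [b]).length • leftNormed R (l ++ [b]) := by
          rw [leftNormed_append_singleton hl, ← lie_skew (letter R b), sub_neg_eq_add,
            List.length_append, List.length_singleton, succ_nsmul]

variable (R) in
def homogeneous (m : ℕ) : Submodule R (WordAlgebra R α) :=
  Submodule.span R (word R '' {l | l.length = m})

theorem word_mem_homogeneous (l : List α) : word R l ∈ homogeneous R l.length :=
  Submodule.subset_span ⟨l, rfl, rfl⟩

theorem mul_mem_homogeneous {m k : ℕ} {u v : WordAlgebra R α} (hu : u ∈ homogeneous R m)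
    (hv : v ∈ homogeneous R k) : u * v ∈ homogeneous R (m + k) := by
  have : homogeneous R m * homogeneous R k ≤ homogeneous R (α := α) (m + k) := by
    rw [homogeneous, homogeneous, Submodule.span_mul_span]
    refine Submodule.span_mono ?_
    rintro _ ⟨_, ⟨l, rfl, rfl⟩, _, ⟨t, rfl, rfl⟩, rfl⟩
    exact ⟨l ++ t, List.length_append, word_append l t⟩
  exact this (Submodule.mul_mem_mul hu hv)

theorem leftNormed_mem_homogeneous (l : List α) : leftNormed R l ∈ homogeneous R l.length := by
  induction l using List.reverseRecOn with
  | nil => exact zero_mem _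
  | append_singleton l b ih =>
    rcases eq_or_ne l [] with rfl | hl
    · exact word_mem_homogeneous [b]
    have hb := word_mem_homogeneous (R := R) [b]
    rw [leftNormed_append_singleton hl, Ring.lie_def, List.length_append]
    refine sub_mem (mul_mem_homogeneous ih hb) ?_
    rw [add_comm]
    exact mul_mem_homogeneous hb ih

variable (R) in
def partialDynkin (m : ℕ) : WordAlgebra R α →ₗ[R] WordAlgebra R α :=
  liftWord R fun l => leftNormed R (l.take m) * word R (l.drop m)

variable (R) in
def moveLetterToFront (m : ℕ) : WordAlgebra R α →ₗ[R] WordAlgebra R α :=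
  liftWord R fun l => word R (List.moveToFront m l)

theorem moveLetterToFront_mul {m : ℕ} {P : WordAlgebra R α} (hP : P ∈ homogeneous R m) (b : α)
    (r : List α) :
    moveLetterToFront R m (P * word R (b :: r)) = letter R b * P * word R r := by
  induction hP using Submodule.span_induction with
  | mem x hx =>
    obtain ⟨t, ht, rfl⟩ := hx
    rw [← word_append, moveLetterToFront, liftWord_word, List.moveToFront_append_cons ht, word_cons,
      word_append, mul_assoc]
  | zero => simp
  | add x y _ _ hx hy => simp only [add_mul, mul_add, map_add, hx, hy]
  | smul c x _ hx => simp only [smul_mul_assoc, mul_smul_comm, map_smul, hx]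

theorem partialDynkin_eq_dynkin {n : ℕ} {u : WordAlgebra R α} (hu : u ∈ homogeneous R n) :
    partialDynkin R n u = dynkin R u := by
  refine LinearMap.eqOn_span ?_ hu
  rintro _ ⟨l, rfl, rfl⟩
  simp [partialDynkin, dynkin, word_nil]

theorem partialDynkin_one {n : ℕ} (hn : 0 < n) {u : WordAlgebra R α}
    (hu : u ∈ homogeneous R n) : partialDynkin R 1 u = u := by
  refine LinearMap.eqOn_span (g := LinearMap.id) ?_ hu
  rintro _ ⟨_ | ⟨a, l⟩, hl, rfl⟩
  · simp at hl; omega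
  · rw [partialDynkin, liftWord_word, LinearMap.id_apply, word_cons]
    rfl

theorem partialDynkin_succ {m n : ℕ} (hm : 0 < m) (hmn : m < n) {u : WordAlgebra R α}
    (hu : u ∈ homogeneous R n) :
    partialDynkin R (m + 1) u =
      partialDynkin R m u - moveLetterToFront R m (partialDynkin R m u) := by
  refine LinearMap.eqOn_span (g := partialDynkin R m - moveLetterToFront R m ∘ₗ partialDynkin R m)
    ?_ hu
  rintro _ ⟨w, rfl, rfl⟩
  obtain ⟨t, b, r, rfl, rfl⟩ :
      ∃ (t : List α) (b : α) (r : List α), w = t ++ b :: r ∧ t.length = m :=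
    ⟨w.take m, w.get ⟨m, hmn⟩, w.drop (m + 1), by simp, by simp; omega⟩
  have ht : t ≠ [] := List.ne_nil_of_length_pos hm
  simp only [partialDynkin, LinearMap.sub_apply, LinearMap.comp_apply, liftWord_word]
  have hb : (t ++ [b]).length = t.length + 1 := by simp
  have hw : t ++ b :: r = t ++ [b] ++ r := by simp
  rw [List.take_left, List.drop_left, hw, List.take_left' hb, List.drop_left' hb,
    leftNormed_append_singleton ht,
    moveLetterToFront_mul (leftNormed_mem_homogeneous t), word_cons, Ring.lie_def]
  noncomm_ring

def genericWord (n : ℕ) (g : Perm ℕ) : FreeMonoid ℕ := FreeMonoid.ofList ((List.range n).map ⇑g⁻¹)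

variable (R) in
def toWordAlgebra (n : ℕ) : MonoidAlgebra R (Perm ℕ) →ₗ[R] WordAlgebra R ℕ :=
  mapDomainLinearMap R R (genericWord n)

theorem toWordAlgebra_single (n : ℕ) (g : Perm ℕ) (c : R) :
    toWordAlgebra R n (single g c) = c • word R ((List.range n).map ⇑g⁻¹) := by
  rw [toWordAlgebra, mapDomainLinearMap_single, word, smul_of]
  rfl

theorem toWordAlgebra_one (n : ℕ) : toWordAlgebra R n 1 = word R (List.range n) := by
  rw [MonoidAlgebra.one_def, toWordAlgebra_single, inv_one, Perm.coe_one, List.map_id, one_smul]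

theorem toWordAlgebra_mem_homogeneous (n : ℕ) (z : MonoidAlgebra R (Perm ℕ)) :
    toWordAlgebra R n z ∈ homogeneous R n := by
  induction z using MonoidAlgebra.induction_linear with
  | zero => simp
  | add x y hx hy => rw [map_add]; exact add_mem hx hy
  | single g c =>
    rw [toWordAlgebra_single]
    simpa using Submodule.smul_mem _ c (word_mem_homogeneous (R := R) ((List.range n).map ⇑g⁻¹))

theorem toWordAlgebra_of_formPerm_mul {m n : ℕ} (h : m + 1 ≤ n) (z : MonoidAlgebra R (Perm ℕ)) :
    toWordAlgebra R n (of R _ (List.range (m + 1)).formPerm * z) =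
      moveLetterToFront R m (toWordAlgebra R n z) := by
  induction z using MonoidAlgebra.induction_linear with
  | zero => simp
  | add x y hx hy => rw [mul_add, map_add, map_add, hx, hy, map_add]
  | single g c =>
    rw [of_apply, single_mul_single, one_mul, toWordAlgebra_single, toWordAlgebra_single,
      map_smul, moveLetterToFront, liftWord_word, mul_inv_rev, Perm.coe_mul, ← List.map_map,
      List.map_inv_formPerm_range h, List.map_moveToFront]

theorem toWordAlgebra_injOn (n : ℕ) :
    Set.InjOn (toWordAlgebra R n)
      (mapDomainAlgHom R R (fixingSubgroup (Perm ℕ) (Set.Ici n)).subtype).range := by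
  set H := fixingSubgroup (Perm ℕ) (Set.Ici n)
  have hinj : Function.Injective (genericWord n ∘ H.subtype) := by
    have hfix {g : Perm ℕ} (hg : g ∈ H) {i : ℕ} (hi : ¬i < n) : g i = i :=
      (mem_fixingSubgroup_iff _).1 hg i (Set.mem_Ici.2 (not_lt.1 hi))
    intro g k hgk
    refine Subtype.ext (inv_injective (Perm.ext fun i => ?_))
    by_cases hi : i < n
    · exact List.map_inj_left.1 (FreeMonoid.ofList.injective hgk) i (List.mem_range.2 hi)
    · rw [hfix (H.inv_mem g.2) hi, hfix (H.inv_mem k.2) hi]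
  have hcomp (x : MonoidAlgebra R H) : toWordAlgebra R n (mapDomainAlgHom R R H.subtype x) =
      mapDomainLinearMap R R (genericWord n ∘ H.subtype) x := by
    rw [mapDomainLinearMap_comp]
    rfl
  intro _ hx _ hy hxy
  obtain ⟨x, rfl⟩ := (AlgHom.mem_range _).1 hx
  obtain ⟨y, rfl⟩ := (AlgHom.mem_range _).1 hy
  rw [hcomp, hcomp] at hxy
  exact congrArg _ (mapDomain_injective (R := R) hinj hxy)

end WordAlgebra

open WordAlgebra

theorem dswElement_succ {m : ℕ} (hm : 0 < m) :
    dswElement (m + 1) = (1 - of ℚ (Perm ℕ) (List.range (m + 1)).formPerm) * dswElement m := by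
  obtain _ | _ | m := m
  · omega
  · rw [show (List.range 2).formPerm = swap 0 1 from List.formPerm_pair 0 1]
    exact (mul_one _).symm
  · rfl

theorem dswElement_mem_range {m n : ℕ} (h : m ≤ n) :
    dswElement m ∈ (mapDomainAlgHom ℚ ℚ (fixingSubgroup (Perm ℕ) (Set.Ici n)).subtype).range := by
  induction m with
  | zero => exact one_mem _
  | succ m ih =>
    rcases Nat.eq_zero_or_pos m with rfl | hm
    · exact one_mem _
    rw [dswElement_succ hm]
    refine mul_mem (sub_mem (one_mem _) ⟨of ℚ _ ⟨_, List.formPerm_range_mem_fixingSubgroup h⟩, ?_⟩)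
      (ih (by omega))
    simp

theorem toWordAlgebra_dswElement_mul {m n : ℕ} (hm : 0 < m) (h : m ≤ n)
    (z : MonoidAlgebra ℚ (Perm ℕ)) :
    toWordAlgebra ℚ n (dswElement m * z) = partialDynkin ℚ m (toWordAlgebra ℚ n z) := by
  induction m with
  | zero => omega
  | succ m ih =>
    rcases Nat.eq_zero_or_pos m with rfl | hm
    · rw [show dswElement 1 = 1 from rfl, one_mul,
        partialDynkin_one (by omega) (toWordAlgebra_mem_homogeneous n z)]
    rw [dswElement_succ hm, sub_mul, one_mul, sub_mul, map_sub, mul_assoc,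
      toWordAlgebra_of_formPerm_mul h, ih hm (by omega),
      partialDynkin_succ hm (by omega) (toWordAlgebra_mem_homogeneous n z)]

theorem toWordAlgebra_dswElement {n : ℕ} (hn : 0 < n) :
    toWordAlgebra ℚ n (dswElement n) = leftNormed ℚ (List.range n) := by
  have hw : word ℚ (List.range n) ∈ homogeneous ℚ n := by
    simpa using word_mem_homogeneous (R := ℚ) (List.range n)
  rw [← mul_one (dswElement n), toWordAlgebra_dswElement_mul hn le_rfl, toWordAlgebra_one,
    partialDynkin_eq_dynkin hw, dynkin_word]

theorem dswElement_mul_self {n : ℕ} (hn : 0 < n) :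
    dswElement n * dswElement n = (n : ℚ) • dswElement n := by
  have hβ := dswElement_mem_range (le_refl n)
  refine toWordAlgebra_injOn n (mul_mem hβ hβ) (Subalgebra.smul_mem _ hβ _) ?_
  have hL : leftNormed ℚ (List.range n) ∈ homogeneous ℚ n := by
    simpa using leftNormed_mem_homogeneous (R := ℚ) (List.range n)
  rw [toWordAlgebra_dswElement_mul hn le_rfl, toWordAlgebra_dswElement hn, map_smul,
    toWordAlgebra_dswElement hn, partialDynkin_eq_dynkin hL,
    dynkin_leftNormed, List.length_range, Nat.cast_smul_eq_nsmul]

end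

/-- The Dynkin–Specht–Wever identity `βₙ ∘ βₙ = n · βₙ`; consequently, for odd `n`
(so `n` is invertible), `(1/n) · βₙ` is idempotent. -/
theorem stmt_6 :
    (∀ n : ℕ, 2 ≤ n → dswElement n * dswElement n = (n : ℚ) • dswElement n) ∧
    (∀ n : ℕ, 2 ≤ n → Odd n →
      ((1 / (n : ℚ)) • dswElement n) * ((1 / (n : ℚ)) • dswElement n) =
        (1 / (n : ℚ)) • dswElement n) := by
  refine ⟨fun n hn => dswElement_mul_self (by omega), fun n hn _ => ?_⟩
  have hn' : (n : ℚ) ≠ 0 := Nat.cast_ne_zero.2 (by omega)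
  rw [smul_mul_smul_comm, dswElement_mul_self (by omega), smul_smul]
  congr 1
  field_simp
end

section
/- Let V be a graded 𝔽₂-vector space with basis {u, v}, |u| < |v|. Let β_{2k+1} : V^{⊗(2k+1)} → V^{⊗(2k+1)} be the Dynkin–Specht–Wever map (left-normed bracketing). Then β_{2k+1}(ad^k([u,v])(u)) = ad^k([u,v])(u) and β_{2k+1}(ad^k([u,v])(v)) = ad^k([u,v])(v), where ad^k([u,v])(x) denotes the iterated bracket [[...[x,[u,v]],...],[u,v]] (k times) viewed as an element of V^{⊗(2k+1)} via [a,b] = a⊗b + b⊗a. -/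
/-! Expanding `ad^k([u,v])(x)` step by step replaces each word `w` by the four words of
`[w,[u,v]] = wuv + wvu + uvw + vuw`. Over `𝔽₂` the left-normed brackets of these four words add
up to `[b(w),[u,v]]`, where `b(w)` is the bracket of `w`: the brackets of `uvw` and `vuw` are equal
and cancel, and `[[b,u],v] + [[b,v],u] = [b,[u,v]]` is the Jacobi identity. Hence the brackets of
the words of `ad^k([u,v])(x)` add up to `ad^k([u,v])(x)` itself, which the linear map `β` therefore
fixes. -/

/-- The bracket `[a,b] = ab + ba` in characteristic 2. -/
def br2 {R : Type*} [Ring R] (a b : R) : R := a * b + b * a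

/-- The expansion in the free algebra over `𝔽₂` on generators `{u, v}` (modelled on `Bool`,
`u = ι false`, `v = ι true`) of the left-normed commutator of a word, with `[a,b] = ab + ba`. -/
def lnb : List Bool → FreeAlgebra (ZMod 2) Bool
  | [] => 0
  | (a :: rest) =>
      rest.foldl (fun acc x => br2 acc (FreeAlgebra.ι (ZMod 2) x))
        (FreeAlgebra.ι (ZMod 2) a)

/-- Iterated adjoint action with `ad(x)(y) = [y,x]`, `[a,b] = ab + ba` (characteristic 2). -/
def adPow2 (x : FreeAlgebra (ZMod 2) Bool) :
    ℕ → FreeAlgebra (ZMod 2) Bool → FreeAlgebra (ZMod 2) Bool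
  | 0, y => y
  | (i + 1), y => br2 (adPow2 x i y) x

section Bracket

variable {R : Type*} [Ring R]

theorem br2_comm (a b : R) : br2 a b = br2 b a := add_comm _ _

theorem br2_add_left (a b c : R) : br2 (a + b) c = br2 a c + br2 b c := by
  simp only [br2, add_mul, mul_add]
  abel

theorem list_sum_map_br2 {α : Type*} (l : List α) (f : α → R) (c : R) :
    (l.map fun a => br2 (f a) c).sum = br2 (l.map f).sum c := by
  induction l with
  | nil => simp [br2]
  | cons a l ih => simp [br2_add_left, ih]

/-- The Jacobi identity: in characteristic `2`, `br2` is a Lie bracket. -/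
theorem br2_br2_add_br2_br2 [CharP R 2] (y a b : R) :
    br2 (br2 y a) b + br2 (br2 y b) a = br2 y (br2 a b) := by
  have h : br2 (br2 y a) b + br2 (br2 y b) a
      = br2 y (br2 a b) + ((a * y * b + b * y * a) + (a * y * b + b * y * a)) := by
    simp only [br2, add_mul, mul_add, mul_assoc]
    abel
  rw [h, CharTwo.add_self_eq_zero, add_zero]

end Bracket

theorem List.sum_map_flatMap {α β M : Type*} [AddMonoid M] (l : List α) (g : α → List β)
    (f : β → M) : ((l.flatMap g).map f).sum = (l.map fun a => ((g a).map f).sum).sum := by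
  induction l with
  | nil => simp
  | cons a l ih => simp [ih]

open FreeAlgebra

local notation "F" => FreeAlgebra (ZMod 2) Bool

noncomputable def wordProd (w : List Bool) : F := (w.map (ι (ZMod 2))).prod

theorem lnb_append_singleton {w : List Bool} (hw : w ≠ []) (x : Bool) :
    lnb (w ++ [x]) = br2 (lnb w) (ι (ZMod 2) x) := by
  obtain ⟨a, w, rfl⟩ := List.exists_cons_of_ne_nil hw
  simp only [lnb, List.cons_append, List.foldl_append, List.foldl_cons, List.foldl_nil]

theorem lnb_cons_cons_comm (a b : Bool) (w : List Bool) :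
    lnb (a :: b :: w) = lnb (b :: a :: w) := by
  simp only [lnb, List.foldl_cons, br2_comm (ι (ZMod 2) a)]

/-- The words of `[w, [u,v]] = w u v + w v u + u v w + v u w`. -/
def bracketWords (w : List Bool) : List (List Bool) :=
  [w ++ [false, true], w ++ [true, false], false :: true :: w, true :: false :: w]

theorem length_of_mem_bracketWords {w w' : List Bool} (h : w' ∈ bracketWords w) :
    w'.length = w.length + 2 := by
  simp only [bracketWords, List.mem_cons, List.not_mem_nil, or_false] at h
  rcases h with rfl | rfl | rfl | rfl <;> simp

theorem sum_map_wordProd_bracketWords (w : List Bool) :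
    ((bracketWords w).map wordProd).sum
      = br2 (wordProd w) (br2 (ι (ZMod 2) false) (ι (ZMod 2) true)) := by
  simp only [bracketWords, wordProd, List.map_cons, List.map_nil, List.map_append,
    List.prod_append, List.prod_cons, List.prod_nil, List.sum_cons, List.sum_nil, br2,
    mul_one, add_zero, mul_add, add_mul, mul_assoc]
  abel

theorem sum_map_lnb_bracketWords {w : List Bool} (hw : w ≠ []) :
    ((bracketWords w).map lnb).sum
      = br2 (lnb w) (br2 (ι (ZMod 2) false) (ι (ZMod 2) true)) := by
  have hpair (a b : Bool) : w ++ [a, b] = (w ++ [a]) ++ [b] := by simp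
  simp only [bracketWords, List.map_cons, List.map_nil, List.sum_cons, List.sum_nil, add_zero,
    hpair, lnb_append_singleton (List.append_ne_nil_of_left_ne_nil hw _),
    lnb_append_singleton hw, lnb_cons_cons_comm true false, CharTwo.add_self_eq_zero,
    br2_br2_add_br2_br2]

def FixedByBracketing (n : ℕ) (z : F) : Prop :=
  ∃ ws : List (List Bool), (∀ w ∈ ws, w.length = n) ∧
    (ws.map wordProd).sum = z ∧ (ws.map lnb).sum = z

namespace FixedByBracketing

theorem generator (x : Bool) : FixedByBracketing 1 (ι (ZMod 2) x) :=
  ⟨[[x]], by simp, by simp [wordProd], by simp [lnb]⟩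

theorem br2_br2 {n : ℕ} {z : F} (hz : FixedByBracketing n z) (hn : 0 < n) :
    FixedByBracketing (n + 2) (br2 z (br2 (ι (ZMod 2) false) (ι (ZMod 2) true))) := by
  obtain ⟨ws, hlen, hprod, hlnb⟩ := hz
  refine ⟨ws.flatMap bracketWords, ?_, ?_, ?_⟩
  · simp only [List.mem_flatMap]
    rintro w' ⟨w, hw, hw'⟩
    rw [length_of_mem_bracketWords hw', hlen w hw]
  · rw [List.sum_map_flatMap, List.map_congr_left fun w _ => sum_map_wordProd_bracketWords w,
      list_sum_map_br2, hprod]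
  · have hne (w) (hw : w ∈ ws) : w ≠ [] := List.ne_nil_of_length_pos (hlen w hw ▸ hn)
    rw [List.sum_map_flatMap,
      List.map_congr_left fun w hw => sum_map_lnb_bracketWords (hne w hw),
      list_sum_map_br2, hlnb]

theorem adPow2_generator (k : ℕ) (x : Bool) :
    FixedByBracketing (2 * k + 1)
      (adPow2 (br2 (ι (ZMod 2) false) (ι (ZMod 2) true)) k (ι (ZMod 2) x)) := by
  induction k with
  | zero => exact generator x
  | succ k ih => exact ih.br2_br2 (2 * k).succ_pos

theorem map_eq_self {n : ℕ} {z : F} (hz : FixedByBracketing n z) (β : F →ₗ[ZMod 2] F)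
    (hβ : ∀ w : List Bool, w.length = n → β (wordProd w) = lnb w) : β z = z := by
  obtain ⟨ws, hlen, hprod, hlnb⟩ := hz
  calc β z
    _ = (ws.map fun w => β (wordProd w)).sum := by
      rw [← hprod, map_list_sum, List.map_map]; rfl
    _ = z := by rw [List.map_congr_left fun w hw => hβ w (hlen w hw), hlnb]

end FixedByBracketing

/-- Let `β` be the (linear) Dynkin–Specht–Wever left-normed bracketing map in degree `2k+1`,
i.e. `β` sends each pure tensor (word) of length `2k+1` to the expansion of its left-normed
commutator.  Then `ad^k([u,v])(u)` and `ad^k([u,v])(v)` are fixed by `β`. -/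
theorem stmt_11 (k : ℕ)
    (β : FreeAlgebra (ZMod 2) Bool →ₗ[ZMod 2] FreeAlgebra (ZMod 2) Bool)
    (hβ : ∀ l : List Bool, l.length = 2 * k + 1 →
      β ((l.map (FreeAlgebra.ι (ZMod 2))).prod) = lnb l) :
    let u : FreeAlgebra (ZMod 2) Bool := FreeAlgebra.ι (ZMod 2) false
    let v : FreeAlgebra (ZMod 2) Bool := FreeAlgebra.ι (ZMod 2) true
    β (adPow2 (br2 u v) k u) = adPow2 (br2 u v) k u ∧
      β (adPow2 (br2 u v) k v) = adPow2 (br2 u v) k v :=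
  ⟨(FixedByBracketing.adPow2_generator k false).map_eq_self β hβ,
    (FixedByBracketing.adPow2_generator k true).map_eq_self β hβ⟩
end
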